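/- arXiv:2409.14156 — 9 statements merged into one kernel-verified Lean document; each statement's English description precedes it below -/
import Mathlib

section
/- For 0 < q < 1, ν > 0, s > 0, and b ≥ (2-q)·(νsq/(1-q)^(1-q))^(1/(2-q)), the equation t + νsq·t^(q-1) = b has at most two roots t₁, t₂ in (0,∞), and they satisfy 0 < t₁ ≤ (νsq(1-q))^(1/(2-q)) ≤ t₂ < b. -/
/-!
Write `f t = t + c t^(q-1)` with `c = νsq > 0`, so that the roots of `g` are the solutions of
`f t = b`. Since `f' t = 1 - c (1 - q) / t^(2-q)`, the function `f` strictly decreases on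
`(0, t̂]` and strictly increases on `[t̂, ∞)`, where `t̂^(2-q) = c (1 - q)`. Hence each level set
of `f` has at most one point on either side of `t̂`, and of two distinct points of a level set the
smaller lies below `t̂` and the larger above it. Finally `f t = b` forces `t < b` because
`c t^(q-1) > 0`.
-/

open Real Set

section Valley

variable {f : ℝ → ℝ} {a m : ℝ}

theorem lt_and_lt_of_strictAntiOn_of_strictMonoOn (hanti : StrictAntiOn f (Ioc a m))
    (hmono : StrictMonoOn f (Ici m)) {x y : ℝ} (hx : a < x) (hxy : x < y) (hf : f x = f y) :
    x < m ∧ m < y := by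
  constructor
  · by_contra! hmx
    exact (hmono hmx (hmx.trans hxy.le) hxy).ne hf
  · by_contra! hym
    exact (hanti ⟨hx, (hxy.trans_le hym).le⟩ ⟨hx.trans hxy, hym⟩ hxy).ne' hf

theorem eq_or_eq_or_eq_of_strictAntiOn_of_strictMonoOn (hanti : StrictAntiOn f (Ioc a m))
    (hmono : StrictMonoOn f (Ici m)) {x y z : ℝ} (hx : a < x) (hy : a < y) (hz : a < z)
    (hxy : f x = f y) (hxz : f x = f z) : x = y ∨ x = z ∨ y = z := by
  have sides : ∀ {u v}, a < u → a < v → f u = f v → u ≠ v →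
      (u < m ∧ m < v) ∨ (v < m ∧ m < u) := fun hu hv huv hne =>
    hne.lt_or_gt.imp (lt_and_lt_of_strictAntiOn_of_strictMonoOn hanti hmono hu · huv)
      (lt_and_lt_of_strictAntiOn_of_strictMonoOn hanti hmono hv · huv.symm)
  by_contra! hne
  obtain ⟨hne_xy, hne_xz, hne_yz⟩ := hne
  rcases sides hx hy hxy hne_xy with h₁ | h₁ <;> rcases sides hx hz hxz hne_xz with h₂ | h₂ <;>
    rcases sides hy hz (hxy.symm.trans hxz) hne_yz with h₃ | h₃ <;> linarith

end Valley

section AddMulRpow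

variable {c q : ℝ}

theorem one_add_mul_mul_rpow_eq_one_sub_div {x : ℝ} (hx : 0 < x) :
    1 + c * ((q - 1) * x ^ (q - 1 - 1)) = 1 - c * (1 - q) / x ^ (2 - q) := by
  rw [show q - 1 - 1 = -(2 - q) by ring, rpow_neg hx.le]
  ring

theorem rpow_one_div_two_sub_rpow_two_sub (hc : 0 < c) (hq : q < 1) :
    ((c * (1 - q)) ^ (1 / (2 - q))) ^ (2 - q) = c * (1 - q) := by
  rw [one_div, rpow_inv_rpow (by nlinarith) (by linarith)]

theorem hasDerivAt_add_mul_rpow {x : ℝ} (hx : x ≠ 0) :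
    HasDerivAt (fun t => t + c * t ^ (q - 1)) (1 + c * ((q - 1) * x ^ (q - 1 - 1))) x :=
  (hasDerivAt_id x).add ((hasDerivAt_rpow_const (Or.inl hx)).const_mul c)

theorem strictMonoOn_add_mul_rpow (hc : 0 < c) (hq : q < 1) :
    StrictMonoOn (fun t => t + c * t ^ (q - 1)) (Ici ((c * (1 - q)) ^ (1 / (2 - q)))) := by
  set m := (c * (1 - q)) ^ (1 / (2 - q))
  have hm : 0 < m := rpow_pos_of_pos (by nlinarith) _
  refine strictMonoOn_of_deriv_pos (convex_Ici m)
    (fun x hx => (hasDerivAt_add_mul_rpow (hm.trans_le hx).ne').continuousAt.continuousWithinAt)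
    fun x hx => ?_
  rw [interior_Ici] at hx
  have hx0 : 0 < x := hm.trans hx
  rw [(hasDerivAt_add_mul_rpow hx0.ne').deriv, one_add_mul_mul_rpow_eq_one_sub_div hx0, sub_pos,
    div_lt_one (rpow_pos_of_pos hx0 _), ← rpow_one_div_two_sub_rpow_two_sub hc hq]
  exact rpow_lt_rpow hm.le hx (by linarith)

theorem strictAntiOn_add_mul_rpow (hc : 0 < c) (hq : q < 1) :
    StrictAntiOn (fun t => t + c * t ^ (q - 1)) (Ioc 0 ((c * (1 - q)) ^ (1 / (2 - q)))) := by
  set m := (c * (1 - q)) ^ (1 / (2 - q))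
  refine strictAntiOn_of_deriv_neg (convex_Ioc 0 m)
    (fun x hx => (hasDerivAt_add_mul_rpow hx.1.ne').continuousAt.continuousWithinAt)
    fun x hx => ?_
  rw [interior_Ioc] at hx
  rw [(hasDerivAt_add_mul_rpow hx.1.ne').deriv, one_add_mul_mul_rpow_eq_one_sub_div hx.1, sub_neg,
    one_lt_div (rpow_pos_of_pos hx.1 _), ← rpow_one_div_two_sub_rpow_two_sub hc hq]
  exact rpow_lt_rpow hx.1.le hx.2 (by linarith)

end AddMulRpow

theorem stmt_1_general (q ν s b : ℝ) (hq0 : 0 < q) (hq1 : q < 1) (hν : 0 < ν) (hs : 0 < s)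
    (g : ℝ → ℝ) (hg : ∀ t : ℝ, g t = t + ν * s * q * t ^ (q - 1) - b)
    (that : ℝ) (hhat : that = (ν * s * q * (1 - q)) ^ ((1 : ℝ) / (2 - q))) :
    (¬ ∃ t₁ t₂ t₃ : ℝ, t₁ ∈ Set.Ioi (0 : ℝ) ∧ t₂ ∈ Set.Ioi (0 : ℝ) ∧ t₃ ∈ Set.Ioi (0 : ℝ) ∧
        g t₁ = 0 ∧ g t₂ = 0 ∧ g t₃ = 0 ∧ t₁ ≠ t₂ ∧ t₁ ≠ t₃ ∧ t₂ ≠ t₃) ∧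
    (∀ t ∈ Set.Ioi (0 : ℝ), g t = 0 → 0 < t ∧ t < b) ∧
    (∀ t₁ ∈ Set.Ioi (0 : ℝ), ∀ t₂ ∈ Set.Ioi (0 : ℝ), g t₁ = 0 → g t₂ = 0 → t₁ < t₂ →
        t₁ ≤ that ∧ that ≤ t₂) := by
  have hc : 0 < ν * s * q := by positivity
  have hanti := strictAntiOn_add_mul_rpow hc hq1
  have hmono := strictMonoOn_add_mul_rpow hc hq1
  rw [← hhat] at hanti hmono
  have root_iff : ∀ t, g t = 0 ↔ t + ν * s * q * t ^ (q - 1) = b := fun t => by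
    rw [hg, sub_eq_zero]
  refine ⟨?_, fun t ht hgt => ?_, fun t₁ ht₁ t₂ _ hg₁ hg₂ h₁₂ => ?_⟩
  · rintro ⟨t₁, t₂, t₃, ht₁, ht₂, ht₃, hg₁, hg₂, hg₃, h₁₂, h₁₃, h₂₃⟩
    rw [root_iff] at hg₁ hg₂ hg₃
    rcases eq_or_eq_or_eq_of_strictAntiOn_of_strictMonoOn hanti hmono ht₁ ht₂ ht₃
      (hg₁.trans hg₂.symm) (hg₁.trans hg₃.symm) with h | h | h <;> contradiction
  · have : 0 < ν * s * q * t ^ (q - 1) := mul_pos hc (rpow_pos_of_pos ht _)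
    exact ⟨ht, by linarith [(root_iff t).1 hgt]⟩
  · rw [root_iff] at hg₁ hg₂
    have := lt_and_lt_of_strictAntiOn_of_strictMonoOn hanti hmono ht₁ h₁₂ (hg₁.trans hg₂.symm)
    exact ⟨this.1.le, this.2.le⟩

theorem stmt_1 (q ν s b : ℝ) (hq0 : 0 < q) (hq1 : q < 1) (hν : 0 < ν) (hs : 0 < s)
    (hb : (2 - q) * (ν * s * q / (1 - q) ^ (1 - q)) ^ ((1 : ℝ) / (2 - q)) ≤ b)
    (g : ℝ → ℝ) (hg : ∀ t : ℝ, g t = t + ν * s * q * t ^ (q - 1) - b)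
    (that : ℝ) (hhat : that = (ν * s * q * (1 - q)) ^ ((1 : ℝ) / (2 - q))) :
    (¬ ∃ t₁ t₂ t₃ : ℝ, t₁ ∈ Set.Ioi (0 : ℝ) ∧ t₂ ∈ Set.Ioi (0 : ℝ) ∧ t₃ ∈ Set.Ioi (0 : ℝ) ∧
        g t₁ = 0 ∧ g t₂ = 0 ∧ g t₃ = 0 ∧ t₁ ≠ t₂ ∧ t₁ ≠ t₃ ∧ t₂ ≠ t₃) ∧
    (∀ t ∈ Set.Ioi (0 : ℝ), g t = 0 → 0 < t ∧ t < b) ∧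
    (∀ t₁ ∈ Set.Ioi (0 : ℝ), ∀ t₂ ∈ Set.Ioi (0 : ℝ), g t₁ = 0 → g t₂ = 0 → t₁ < t₂ →
        t₁ ≤ that ∧ that ≤ t₂) :=
  stmt_1_general q ν s b hq0 hq1 hν hs g hg that hhat
end

section
/- Let 0 < q < 1, ν > 0, and y ∈ ℝⁿ nonzero. If u ∈ ℝⁿ satisfies the stationarity condition y_i − u_i ∈ νq‖u‖₁^(q-1)·Sign(u)_i for all i, then for every index i with u_i ≠ 0 we have sign(u_i) = sign(y_i) and |u_i| < |y_i|, and u_i = y_i − νq‖u‖₁^(q-1)·sign(u_i). -/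
open Real Set

/-- The componentwise sign set: {1} if x > 0, [-1,1] if x = 0, {-1} if x < 0. -/
def SignSet (x : ℝ) : Set ℝ :=
  if 0 < x then {1} else if x < 0 then {-1} else Set.Icc (-1) 1

lemma signSet_of_ne_zero {x : ℝ} (hx : x ≠ 0) : SignSet x = {Real.sign x} := by
  rcases hx.lt_or_gt with hneg | hpos
  · simp [SignSet, hneg, hneg.not_gt, Real.sign_of_neg hneg]
  · simp [SignSet, hpos, Real.sign_of_pos hpos]

lemma sign_add_mul_sign {x c : ℝ} (hc : 0 ≤ c) (hx : x ≠ 0) :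
    Real.sign (x + c * Real.sign x) = Real.sign x := by
  rcases hx.lt_or_gt with hneg | hpos
  · rw [Real.sign_of_neg hneg, Real.sign_of_neg (by linarith)]
  · rw [Real.sign_of_pos hpos, Real.sign_of_pos (by linarith)]

lemma abs_lt_abs_add_mul_sign {x c : ℝ} (hc : 0 < c) (hx : x ≠ 0) :
    |x| < |x + c * Real.sign x| := by
  rcases hx.lt_or_gt with hneg | hpos
  · rw [Real.sign_of_neg hneg, abs_of_neg hneg, abs_of_neg (by linarith)]
    linarith
  · rw [Real.sign_of_pos hpos, abs_of_pos hpos, abs_of_pos (by linarith)]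
    linarith

theorem stmt_5_general (n : ℕ) (q ν : ℝ) (hq0 : 0 < q) (hν : 0 < ν)
    (y u : Fin n → ℝ)
    (hstat : ∀ i : Fin n,
      y i - u i ∈ (fun z : ℝ => ν * q * (∑ j, |u j|) ^ (q - 1) * z) '' SignSet (u i)) :
    ∀ i : Fin n, u i ≠ 0 →
      Real.sign (u i) = Real.sign (y i) ∧ |u i| < |y i| ∧
      u i = y i - ν * q * (∑ j, |u j|) ^ (q - 1) * Real.sign (u i) := by
  intro i hui
  have hnorm : 0 < ∑ j, |u j| :=
    (abs_pos.2 hui).trans_le (Finset.single_le_sum (fun j _ => abs_nonneg (u j)) (Finset.mem_univ i))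
  set c := ν * q * (∑ j, |u j|) ^ (q - 1)
  have hc : 0 < c := mul_pos (mul_pos hν hq0) (rpow_pos_of_pos hnorm _)
  obtain ⟨z, hz, hyu⟩ := hstat i
  rw [signSet_of_ne_zero hui, mem_singleton_iff] at hz
  have hy : y i = u i + c * Real.sign (u i) := by
    subst hz
    linarith
  rw [hy, sign_add_mul_sign hc.le hui]
  exact ⟨rfl, abs_lt_abs_add_mul_sign hc hui, by ring⟩

theorem stmt_5 (n : ℕ) (q ν : ℝ) (hq0 : 0 < q) (hq1 : q < 1) (hν : 0 < ν)
    (y u : Fin n → ℝ) (hy : y ≠ 0) (hu : u ≠ 0)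
    (hstat : ∀ i : Fin n,
      y i - u i ∈ (fun z : ℝ => ν * q * (∑ j, |u j|) ^ (q - 1) * z) '' SignSet (u i)) :
    ∀ i : Fin n, u i ≠ 0 →
      Real.sign (u i) = Real.sign (y i) ∧ |u i| < |y i| ∧
      u i = y i - ν * q * (∑ j, |u j|) ^ (q - 1) * Real.sign (u i) :=
  stmt_5_general n q ν hq0 hν y u hstat
end

section
/- Let 0 < q < 1, ν > 0, and y ∈ ℝⁿ nonzero. If u satisfies the stationarity condition y_i − u_i ∈ νq‖u‖₁^(q-1)·Sign(u)_i for all i (with u ≠ 0), then for every index i with |y_i| ≤ νq‖u‖₁^(q-1), one has u_i = 0. -/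
open Real Set

theorem signSet_of_pos {x : ℝ} (hx : 0 < x) : SignSet x = {1} := by
  simp only [SignSet, if_pos hx]

theorem signSet_of_neg {x : ℝ} (hx : x < 0) : SignSet x = {-1} := by
  simp only [SignSet, if_neg hx.not_gt, if_pos hx]

/-- If `u ≠ 0`, the inclusion forces `y = u + c * sign u`, so `|y| = |u| + c > c`. -/
theorem eq_zero_of_sub_mem_image_signSet {c y u : ℝ}
    (hstat : y - u ∈ (fun z : ℝ => c * z) '' SignSet u) (hy : |y| ≤ c) : u = 0 := by
  obtain ⟨z, hz, hyu⟩ := hstat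
  rcases lt_trichotomy u 0 with hneg | hzero | hpos
  · rw [signSet_of_neg hneg, mem_singleton_iff] at hz
    subst hz
    linarith [neg_abs_le y]
  · exact hzero
  · rw [signSet_of_pos hpos, mem_singleton_iff] at hz
    subst hz
    linarith [le_abs_self y]

theorem stmt_6_general (n : ℕ) (q ν : ℝ)
    (y u : Fin n → ℝ)
    (hstat : ∀ i : Fin n,
      y i - u i ∈ (fun z : ℝ => ν * q * (∑ j, |u j|) ^ (q - 1) * z) '' SignSet (u i)) :
    ∀ i : Fin n, |y i| ≤ ν * q * (∑ j, |u j|) ^ (q - 1) → u i = 0 :=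
  fun i => eq_zero_of_sub_mem_image_signSet (hstat i)

theorem stmt_6 (n : ℕ) (q ν : ℝ) (hq0 : 0 < q) (hq1 : q < 1) (hν : 0 < ν)
    (y u : Fin n → ℝ) (hy : y ≠ 0) (hu : u ≠ 0)
    (hstat : ∀ i : Fin n,
      y i - u i ∈ (fun z : ℝ => ν * q * (∑ j, |u j|) ^ (q - 1) * z) '' SignSet (u i)) :
    ∀ i : Fin n, |y i| ≤ ν * q * (∑ j, |u j|) ^ (q - 1) → u i = 0 :=
  stmt_6_general n q ν y u hstat
end

section
/- Let 0 < q < 1, ν > 0, and c_{ν,q} = ((2−q)/(2(1−q)))·(2ν(1−q))^(1/(2−q)). For y ∈ ℝⁿ with max_i |y_i| > c_{ν,q}, the zero vector is not a minimizer of J_y(u) = ν‖u‖₁^q + (1/2)‖u−y‖₂²; that is, there exists u ∈ ℝⁿ with J_y(u) < J_y(0) = (1/2)‖y‖₂². -/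
/-!
Zero is beaten by a one-sparse vector. Put `t = (2ν(1-q))^(1/(2-q))`, so that `t² = 2ν(1-q) t^q`;
then `ν t^q + t²/2 = c_{ν,q} t`. Moving from `0` to `u = ±t eᵢ`, with the sign of `yᵢ`, changes `J_y`
by `ν t^q + t²/2 - t|yᵢ| = t (c_{ν,q} - |yᵢ|)`, which is negative as soon as `|yᵢ| > c_{ν,q}`.
-/

open Real Set

namespace LqThreshold

variable {q ν : ℝ}

lemma sq_eq_mul_rpow_of_rpow_two_sub_eq {t : ℝ} (ht : 0 < t)
    (htq : t ^ (2 - q) = 2 * ν * (1 - q)) : t ^ 2 = 2 * ν * (1 - q) * t ^ q := by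
  rw [← htq, ← Real.rpow_add ht, sub_add_cancel, ← Real.rpow_natCast]
  norm_num

lemma penalty_add_half_sq_eq_threshold_mul (hq1 : q < 1) {t : ℝ} (ht : 0 < t)
    (htq : t ^ (2 - q) = 2 * ν * (1 - q)) :
    ν * t ^ q + t ^ 2 / 2 = (2 - q) / (2 * (1 - q)) * t * t := by
  have h1q : 1 - q ≠ 0 := by linarith
  rw [mul_assoc, ← sq, sq_eq_mul_rpow_of_rpow_two_sub_eq ht htq]
  field_simp
  ring

lemma exists_abs_eq_and_mul_eq_mul_abs {t : ℝ} (ht : 0 ≤ t) (τ : ℝ) :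
    ∃ s : ℝ, |s| = t ∧ s * τ = t * |τ| := by
  rcases le_total 0 τ with hτ | hτ
  · exact ⟨t, abs_of_nonneg ht, by rw [abs_of_nonneg hτ]⟩
  · exact ⟨-t, by rw [abs_neg, abs_of_nonneg ht], by rw [abs_of_nonpos hτ]; ring⟩

lemma exists_scalar_objective_lt (hq1 : q < 1) (hν : 0 < ν) {τ : ℝ}
    (hτ : (2 - q) / (2 * (1 - q)) * (2 * ν * (1 - q)) ^ ((1 : ℝ) / (2 - q)) < |τ|) :
    ∃ s : ℝ, ν * |s| ^ q + (s - τ) ^ 2 / 2 < τ ^ 2 / 2 := by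
  have hA : 0 < 2 * ν * (1 - q) := mul_pos (by positivity) (by linarith)
  have htq : ((2 * ν * (1 - q)) ^ ((1 : ℝ) / (2 - q))) ^ (2 - q) = 2 * ν * (1 - q) := by
    rw [one_div]
    exact Real.rpow_inv_rpow hA.le (by linarith)
  set t := (2 * ν * (1 - q)) ^ ((1 : ℝ) / (2 - q))
  have ht : 0 < t := Real.rpow_pos_of_pos hA _
  have hgain : ν * t ^ q + t ^ 2 / 2 < t * |τ| := by
    rw [penalty_add_half_sq_eq_threshold_mul hq1 ht htq, mul_comm t]
    exact mul_lt_mul_of_pos_right hτ ht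
  obtain ⟨s, hs, hsτ⟩ := exists_abs_eq_and_mul_eq_mul_abs ht.le τ
  refine ⟨s, ?_⟩
  have hexpand : (s - τ) ^ 2 = t ^ 2 - 2 * (t * |τ|) + τ ^ 2 := by
    have hs2 : s ^ 2 = t ^ 2 := by rw [← hs, sq_abs]
    linear_combination hs2 - 2 * hsτ
  rw [hs, hexpand]
  linarith

variable {ι : Type*} [Fintype ι] [DecidableEq ι]

lemma sum_abs_pi_single (i : ι) (s : ℝ) : ∑ j, |Pi.single i s j| = |s| := by
  rw [Finset.sum_eq_single i (fun j _ hj => by simp [hj]) (by simp), Pi.single_eq_same]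

lemma sum_sq_pi_single_sub (i : ι) (s : ℝ) (y : ι → ℝ) :
    ∑ j, ((Pi.single i s : ι → ℝ) j - y j) ^ 2 = ∑ j, y j ^ 2 + ((s - y i) ^ 2 - y i ^ 2) := by
  rw [← sub_eq_iff_eq_add', ← Finset.sum_sub_distrib,
    Finset.sum_eq_single i (fun j _ hj => by simp [hj]) (by simp), Pi.single_eq_same]

end LqThreshold

open LqThreshold in
theorem stmt_7_general (n : ℕ) (q ν : ℝ) (hq1 : q < 1) (hν : 0 < ν)
    (y : Fin n → ℝ)
    (hy : ∃ i : Fin n, ((2 - q) / (2 * (1 - q))) * (2 * ν * (1 - q)) ^ ((1:ℝ) / (2 - q)) < |y i|) :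
    ∃ u : Fin n → ℝ,
      ν * (∑ i, |u i|) ^ q + (∑ i, (u i - y i) ^ 2) / 2 < (∑ i, (y i) ^ 2) / 2 := by
  obtain ⟨i, hi⟩ := hy
  obtain ⟨s, hs⟩ := exists_scalar_objective_lt hq1 hν hi
  refine ⟨Pi.single i s, ?_⟩
  rw [sum_abs_pi_single, sum_sq_pi_single_sub]
  linarith

theorem stmt_7 (n : ℕ) (q ν : ℝ) (hq0 : 0 < q) (hq1 : q < 1) (hν : 0 < ν)
    (y : Fin n → ℝ)
    (hy : ∃ i : Fin n, ((2 - q) / (2 * (1 - q))) * (2 * ν * (1 - q)) ^ ((1:ℝ) / (2 - q)) < |y i|) :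
    ∃ u : Fin n → ℝ,
      ν * (∑ i, |u i|) ^ q + (∑ i, (u i - y i) ^ 2) / 2 < (∑ i, (y i) ^ 2) / 2 :=
  stmt_7_general n q ν hq1 hν y hy
end

section
/- Let 0 < q < 1, ν > 0, and y ∈ ℝⁿ with nonnegative entries. If 0 is not a minimizer of J_y(u) = ν‖u‖₁^q + (1/2)‖u−y‖₂², then for every ȳ ∈ ℝⁿ with ȳ_i > y_i for all i, 0 is not a minimizer of J_ȳ. -/
/-!
Since `½‖u - y‖² - ½‖y‖² = ½‖u‖² - ⟨u, y⟩`, whether `u` beats `0` depends on `y` only through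
`⟨u, y⟩`. Replacing `u` by `|u|` leaves the penalty unchanged, and for `0 ≤ y ≤ ȳ` it gives
`⟨u, y⟩ ≤ ⟨|u|, y⟩ ≤ ⟨|u|, ȳ⟩`, so `|u|` beats `0` for `ȳ` whenever `u` does for `y`.
-/

open Real Set

lemma sq_abs_sub_sub_sq_le {u a b : ℝ} (ha : 0 ≤ a) (hab : a ≤ b) :
    (|u| - b) ^ 2 - b ^ 2 ≤ (u - a) ^ 2 - a ^ 2 := by
  have h : u * a ≤ |u| * b :=
    (mul_le_mul_of_nonneg_right (le_abs_self u) ha).trans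
      (mul_le_mul_of_nonneg_left hab (abs_nonneg u))
  nlinarith [sq_abs u]

lemma sum_sq_abs_sub_sub_sum_sq_le {ι : Type*} [Fintype ι] (u a b : ι → ℝ)
    (ha : ∀ i, 0 ≤ a i) (hab : ∀ i, a i ≤ b i) :
    ∑ i, (|u i| - b i) ^ 2 - ∑ i, b i ^ 2 ≤ ∑ i, (u i - a i) ^ 2 - ∑ i, a i ^ 2 := by
  rw [← Finset.sum_sub_distrib, ← Finset.sum_sub_distrib]
  exact Finset.sum_le_sum fun i _ => sq_abs_sub_sub_sq_le (ha i) (hab i)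

theorem stmt_9_general (n : ℕ) (q ν : ℝ)
    (y : Fin n → ℝ) (hy : ∀ i, 0 ≤ y i)
    (h0 : ∃ u : Fin n → ℝ,
      ν * (∑ i, |u i|) ^ q + (∑ i, (u i - y i) ^ 2) / 2 < (∑ i, (y i) ^ 2) / 2) :
    ∀ ybar : Fin n → ℝ, (∀ i, y i < ybar i) →
      ∃ u : Fin n → ℝ,
        ν * (∑ i, |u i|) ^ q + (∑ i, (u i - ybar i) ^ 2) / 2 < (∑ i, (ybar i) ^ 2) / 2 := by
  intro ybar hyb
  obtain ⟨u, hu⟩ := h0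
  refine ⟨fun i => |u i|, ?_⟩
  simp only [abs_abs]
  linarith [sum_sq_abs_sub_sub_sum_sq_le u y ybar hy fun i => (hyb i).le]

theorem stmt_9 (n : ℕ) (q ν : ℝ) (hq0 : 0 < q) (hq1 : q < 1) (hν : 0 < ν)
    (y : Fin n → ℝ) (hy : ∀ i, 0 ≤ y i)
    (h0 : ∃ u : Fin n → ℝ,
      ν * (∑ i, |u i|) ^ q + (∑ i, (u i - y i) ^ 2) / 2 < (∑ i, (y i) ^ 2) / 2) :
    ∀ ybar : Fin n → ℝ, (∀ i, y i < ybar i) →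
      ∃ u : Fin n → ℝ,
        ν * (∑ i, |u i|) ^ q + (∑ i, (u i - ybar i) ^ 2) / 2 < (∑ i, (ybar i) ^ 2) / 2 :=
  stmt_9_general n q ν y hy h0
end

section
/- Let 0 < q < 1, ν > 0, τ > 0, and n ≥ 1. The set of minimizers of u ↦ ν‖u‖₁^q + (1/2)‖u − τ·𝟙‖₂² over ℝⁿ (where 𝟙 is the all-ones vector) equals {τ*·𝟙 : τ* ∈ argmin_{t∈ℝ} νn^(q-1)|t|^q + (1/2)(t−τ)²}. -/
/-!
Let `m = ‖v‖₁ / n`. From `(vᵢ - τ)² = (|vᵢ| - τ)² + 2τ(|vᵢ| - vᵢ)` and the variance decomposition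
`Σ (|vᵢ| - τ)² = Σ (|vᵢ| - m)² + n (m - τ)²`, the objective at `v` equals its value at `m·𝟙` plus
`½ Σ (|vᵢ| - m)² + τ Σ (|vᵢ| - vᵢ)`. This remainder is nonnegative and, since `τ > 0`, vanishes only
at `v = m·𝟙`, so every minimizer is constant. On constant vectors the objective is `n` times the
scalar one, as `ν (n|t|)^q = n · ν n^(q-1) |t|^q`.
-/

open Real

variable {ι : Type*} [Fintype ι]

theorem sum_sub_sq_eq_sum_sub_mean_sq_add [Nonempty ι] (y : ι → ℝ) (a : ℝ) :
    ∑ i, (y i - a) ^ 2 =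
      ∑ i, (y i - (∑ j, y j) / Fintype.card ι) ^ 2 +
        Fintype.card ι * ((∑ j, y j) / Fintype.card ι - a) ^ 2 := by
  set N : ℝ := (Fintype.card ι : ℝ)
  set m := (∑ j, y j) / N
  have hN : N ≠ 0 := by positivity
  have hdev : ∑ i, (y i - m) = 0 := by
    rw [Finset.sum_sub_distrib, Finset.sum_const, Finset.card_univ, nsmul_eq_mul]
    exact sub_eq_zero.mpr (mul_div_cancel₀ _ hN).symm
  calc ∑ i, (y i - a) ^ 2
      = ∑ i, ((y i - m) ^ 2 + 2 * (m - a) * (y i - m) + (m - a) ^ 2) :=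
        Finset.sum_congr rfl fun i _ => by ring
    _ = ∑ i, (y i - m) ^ 2 + N * (m - a) ^ 2 := by
        rw [Finset.sum_add_distrib, Finset.sum_add_distrib, ← Finset.mul_sum, hdev,
          Finset.sum_const, Finset.card_univ, nsmul_eq_mul]
        ring

theorem sq_sub_eq_sq_abs_sub_add (x τ : ℝ) :
    (x - τ) ^ 2 = (|x| - τ) ^ 2 + 2 * τ * (|x| - x) := by
  rcases abs_cases x with ⟨h, _⟩ | ⟨h, _⟩ <;> rw [h] <;> ring

noncomputable def proxObjective (ν q τ : ℝ) (v : ι → ℝ) : ℝ :=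
  ν * (∑ i, |v i|) ^ q + (∑ i, (v i - τ) ^ 2) / 2

noncomputable def scalarProxObjective (c q τ t : ℝ) : ℝ :=
  c * |t| ^ q + (t - τ) ^ 2 / 2

noncomputable def meanAbs (v : ι → ℝ) : ℝ :=
  (∑ i, |v i|) / Fintype.card ι

section

variable (ν q τ : ℝ)

theorem proxObjective_const [Nonempty ι] (t : ℝ) :
    proxObjective ν q τ (fun _ : ι => t) =
      Fintype.card ι * scalarProxObjective (ν * (Fintype.card ι : ℝ) ^ (q - 1)) q τ t := by
  have hN : (0 : ℝ) < Fintype.card ι := by positivity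
  simp only [proxObjective, scalarProxObjective, Finset.sum_const, Finset.card_univ,
    nsmul_eq_mul, mul_rpow hN.le (abs_nonneg t), rpow_sub_one hN.ne']
  field_simp

theorem proxObjective_eq_const_meanAbs_add [Nonempty ι] (v : ι → ℝ) :
    proxObjective ν q τ v =
      proxObjective ν q τ (fun _ : ι => meanAbs v) +
        (∑ i, (|v i| - meanAbs v) ^ 2) / 2 + τ * ∑ i, (|v i| - v i) := by
  have hm : 0 ≤ meanAbs v := by unfold meanAbs; positivity
  have hl1 : ∑ _i : ι, |meanAbs v| = ∑ i, |v i| := by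
    rw [abs_of_nonneg hm, Finset.sum_const, Finset.card_univ, nsmul_eq_mul, meanAbs]
    field_simp
  have hsq : ∑ i, (v i - τ) ^ 2 = ∑ i, (|v i| - meanAbs v) ^ 2 +
      Fintype.card ι * (meanAbs v - τ) ^ 2 + 2 * τ * ∑ i, (|v i| - v i) := by
    simp only [sq_sub_eq_sq_abs_sub_add (v _) τ, Finset.sum_add_distrib, ← Finset.mul_sum,
      sum_sub_sq_eq_sum_sub_mean_sq_add (fun i => |v i|) τ, meanAbs]
  simp only [proxObjective, hl1, hsq, Finset.sum_const, Finset.card_univ, nsmul_eq_mul]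
  ring

variable {τ}

theorem proxObjective_const_meanAbs_le [Nonempty ι] (hτ : 0 ≤ τ) (v : ι → ℝ) :
    proxObjective ν q τ (fun _ : ι => meanAbs v) ≤ proxObjective ν q τ v := by
  have hdev : 0 ≤ ∑ i, (|v i| - meanAbs v) ^ 2 := by positivity
  have hsign : 0 ≤ ∑ i, (|v i| - v i) :=
    Finset.sum_nonneg fun i _ => sub_nonneg.mpr (le_abs_self _)
  rw [proxObjective_eq_const_meanAbs_add ν q τ v]
  nlinarith

theorem eq_const_meanAbs_of_proxObjective_le [Nonempty ι] (hτ : 0 < τ) {v : ι → ℝ}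
    (h : proxObjective ν q τ v ≤ proxObjective ν q τ (fun _ : ι => meanAbs v)) :
    v = fun _ => meanAbs v := by
  have hdev : 0 ≤ ∑ i, (|v i| - meanAbs v) ^ 2 := by positivity
  have hsign : 0 ≤ ∑ i, (|v i| - v i) :=
    Finset.sum_nonneg fun i _ => sub_nonneg.mpr (le_abs_self _)
  rw [proxObjective_eq_const_meanAbs_add ν q τ v] at h
  have hdev0 : ∑ i, (|v i| - meanAbs v) ^ 2 = 0 := by nlinarith
  have hsign0 : ∑ i, (|v i| - v i) = 0 := by nlinarith
  funext i
  have habs : |v i| = meanAbs v := sub_eq_zero.mp <| (pow_eq_zero_iff two_ne_zero).mp <|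
    (Finset.sum_eq_zero_iff_of_nonneg fun j _ => sq_nonneg _).mp hdev0 i (Finset.mem_univ i)
  have hpos : |v i| = v i := sub_eq_zero.mp <|
    (Finset.sum_eq_zero_iff_of_nonneg fun j _ => sub_nonneg.mpr (le_abs_self (v j))).mp
      hsign0 i (Finset.mem_univ i)
  rw [← hpos, habs]

end

theorem stmt_10_general (n : ℕ) (hn : 1 ≤ n) (q ν τ : ℝ) (hτ : 0 < τ) :
    {u : Fin n → ℝ | ∀ v : Fin n → ℝ,
        ν * (∑ i, |u i|) ^ q + (∑ i, (u i - τ) ^ 2) / 2 ≤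
          ν * (∑ i, |v i|) ^ q + (∑ i, (v i - τ) ^ 2) / 2} =
    {w : Fin n → ℝ | ∃ t : ℝ,
        (∀ s : ℝ, ν * (n : ℝ) ^ (q - 1) * |t| ^ q + (t - τ) ^ 2 / 2 ≤
          ν * (n : ℝ) ^ (q - 1) * |s| ^ q + (s - τ) ^ 2 / 2) ∧
        w = fun _ => t} := by
  have : NeZero n := ⟨by omega⟩
  have hconst (t : ℝ) : proxObjective ν q τ (fun _ : Fin n => t) =
      n * scalarProxObjective (ν * (n : ℝ) ^ (q - 1)) q τ t := by
    simpa only [Fintype.card_fin] using proxObjective_const (ι := Fin n) ν q τ t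
  ext u
  change (∀ v, proxObjective ν q τ u ≤ proxObjective ν q τ v) ↔
    ∃ t, (∀ s, scalarProxObjective _ q τ t ≤ scalarProxObjective _ q τ s) ∧ u = fun _ => t
  constructor
  · intro hu
    have hu_const := eq_const_meanAbs_of_proxObjective_le ν q hτ (hu _)
    refine ⟨meanAbs u, fun s => ?_, hu_const⟩
    have hs := hu fun _ => s
    rw [hu_const, hconst, hconst] at hs
    exact le_of_mul_le_mul_left hs (by positivity)
  · rintro ⟨t, ht, rfl⟩ v
    calc proxObjective ν q τ (fun _ => t)
        = n * scalarProxObjective (ν * (n : ℝ) ^ (q - 1)) q τ t := hconst t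
      _ ≤ n * scalarProxObjective (ν * (n : ℝ) ^ (q - 1)) q τ (meanAbs v) := by
        gcongr; exact ht _
      _ = proxObjective ν q τ (fun _ => meanAbs v) := (hconst _).symm
      _ ≤ proxObjective ν q τ v := proxObjective_const_meanAbs_le ν q hτ.le v

theorem stmt_10 (n : ℕ) (hn : 1 ≤ n) (q ν τ : ℝ) (hq0 : 0 < q) (hq1 : q < 1)
    (hν : 0 < ν) (hτ : 0 < τ) :
    {u : Fin n → ℝ | ∀ v : Fin n → ℝ,
        ν * (∑ i, |u i|) ^ q + (∑ i, (u i - τ) ^ 2) / 2 ≤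
          ν * (∑ i, |v i|) ^ q + (∑ i, (v i - τ) ^ 2) / 2} =
    {w : Fin n → ℝ | ∃ t : ℝ,
        (∀ s : ℝ, ν * (n : ℝ) ^ (q - 1) * |t| ^ q + (t - τ) ^ 2 / 2 ≤
          ν * (n : ℝ) ^ (q - 1) * |s| ^ q + (s - τ) ^ 2 / 2) ∧
        w = fun _ => t} :=
  stmt_10_general n hn q ν τ hτ
end

section
/- Let 0 < q < 1, ν > 0, τ > 0, n ≥ 1, and i ∈ {1,…,n}. The set of minimizers of u ↦ ν‖u‖₁^q + (1/2)‖u − τ·e_i‖₂² over ℝⁿ equals {τ*·e_i : τ* ∈ argmin_{t∈ℝ} ν|t|^q + (1/2)(t−τ)²}, where e_i is the i-th standard basis vector. -/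
open Real Set

/-! The orthogonal projection onto the `i`-th axis, `v ↦ v i • e_i`, does not increase the
`ℓ¹` norm and decreases the squared distance to `a • e_i` by exactly `∑_{j ≠ i} v_j²`. Hence,
for a penalty that is monotone in the `ℓ¹` norm, every minimizer lies on the axis, and on the
axis the objective is the scalar one `t ↦ φ |t| + (t - a)² / 2`. -/

section AxisMinimizers

variable {ι : Type*} [Fintype ι] [DecidableEq ι] (φ : ℝ → ℝ) (a : ℝ) (i : ι)

noncomputable def axisPenalizedObjective (u : ι → ℝ) : ℝ :=
  φ (∑ j, |u j|) + (∑ j, (u j - a * if j = i then 1 else 0) ^ 2) / 2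

theorem axisPenalizedObjective_onAxis (t : ℝ) :
    axisPenalizedObjective φ a i (fun j => if j = i then t else 0) = φ |t| + (t - a) ^ 2 / 2 := by
  simp only [axisPenalizedObjective, apply_ite abs, abs_zero, Finset.sum_ite_eq',
    Finset.mem_univ, if_true]
  rw [Finset.sum_eq_single i (fun j _ hj => by simp [hj]) (by simp)]
  simp

theorem sum_sq_sub_axis (v : ι → ℝ) :
    ∑ j, (v j - a * if j = i then 1 else 0) ^ 2 =
      (v i - a) ^ 2 + ∑ j ∈ Finset.univ.erase i, v j ^ 2 := by
  rw [← Finset.add_sum_erase _ _ (Finset.mem_univ i), if_pos rfl, mul_one]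
  congr 1
  exact Finset.sum_congr rfl fun j hj => by
    rw [if_neg (Finset.ne_of_mem_erase hj), mul_zero, sub_zero]

variable {φ}

theorem axisPenalizedObjective_onAxis_add_le (hφ : MonotoneOn φ (Ici 0)) (v : ι → ℝ) :
    φ |v i| + (v i - a) ^ 2 / 2 + (∑ j ∈ Finset.univ.erase i, v j ^ 2) / 2 ≤
      axisPenalizedObjective φ a i v := by
  have hnorm : |v i| ≤ ∑ j, |v j| :=
    Finset.single_le_sum (f := fun j => |v j|) (fun j _ => abs_nonneg _) (Finset.mem_univ i)
  have hpen : φ |v i| ≤ φ (∑ j, |v j|) :=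
    hφ (mem_Ici.2 (abs_nonneg _)) (mem_Ici.2 ((abs_nonneg _).trans hnorm)) hnorm
  rw [axisPenalizedObjective, sum_sq_sub_axis]
  linarith

theorem eq_onAxis_of_sum_erase_sq_nonpos {v : ι → ℝ}
    (hv : ∑ j ∈ Finset.univ.erase i, v j ^ 2 ≤ 0) :
    v = fun j => if j = i then v i else 0 := by
  have hzero := (Finset.sum_eq_zero_iff_of_nonneg fun j _ => sq_nonneg (v j)).1
    (hv.antisymm (Finset.sum_nonneg fun j _ => sq_nonneg (v j)))
  funext j
  split_ifs with hji
  · rw [hji]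
  · exact (pow_eq_zero_iff two_ne_zero).1
      (hzero j (Finset.mem_erase.2 ⟨hji, Finset.mem_univ j⟩))

theorem setOf_minimizers_axisPenalizedObjective (hφ : MonotoneOn φ (Ici 0)) :
    {u | ∀ v, axisPenalizedObjective φ a i u ≤ axisPenalizedObjective φ a i v} =
      {w | ∃ t : ℝ, (∀ s : ℝ, φ |t| + (t - a) ^ 2 / 2 ≤ φ |s| + (s - a) ^ 2 / 2) ∧
        w = fun j => if j = i then t else 0} := by
  ext u
  constructor
  · intro hu
    have hproj := hu fun j => if j = i then u i else 0
    rw [axisPenalizedObjective_onAxis] at hproj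
    have hoff : ∑ j ∈ Finset.univ.erase i, u j ^ 2 ≤ 0 := by
      linarith [axisPenalizedObjective_onAxis_add_le a i hφ u]
    have hu_eq := eq_onAxis_of_sum_erase_sq_nonpos i hoff
    refine ⟨u i, fun s => ?_, hu_eq⟩
    have hs := hu fun j => if j = i then s else 0
    rwa [hu_eq, axisPenalizedObjective_onAxis, axisPenalizedObjective_onAxis] at hs
  · rintro ⟨t, ht, rfl⟩ v
    rw [axisPenalizedObjective_onAxis]
    have hoff : 0 ≤ ∑ j ∈ Finset.univ.erase i, v j ^ 2 :=
      Finset.sum_nonneg fun j _ => sq_nonneg _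
    linarith [ht (v i), axisPenalizedObjective_onAxis_add_le a i hφ v]

end AxisMinimizers

theorem stmt_11_general (n : ℕ) (q ν τ : ℝ) (hq0 : 0 < q)
    (hν : 0 < ν) (i : Fin n) :
    {u : Fin n → ℝ | ∀ v : Fin n → ℝ,
        ν * (∑ j, |u j|) ^ q + (∑ j, (u j - τ * (if j = i then 1 else 0)) ^ 2) / 2 ≤
          ν * (∑ j, |v j|) ^ q + (∑ j, (v j - τ * (if j = i then 1 else 0)) ^ 2) / 2} =
    {w : Fin n → ℝ | ∃ t : ℝ,
        (∀ s : ℝ, ν * |t| ^ q + (t - τ) ^ 2 / 2 ≤ ν * |s| ^ q + (s - τ) ^ 2 / 2) ∧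
        w = fun j => if j = i then t else 0} :=
  setOf_minimizers_axisPenalizedObjective τ i fun _ hx _ _ hxy =>
    mul_le_mul_of_nonneg_left (rpow_le_rpow hx hxy hq0.le) hν.le

theorem stmt_11 (n : ℕ) (hn : 1 ≤ n) (q ν τ : ℝ) (hq0 : 0 < q) (hq1 : q < 1)
    (hν : 0 < ν) (hτ : 0 < τ) (i : Fin n) :
    {u : Fin n → ℝ | ∀ v : Fin n → ℝ,
        ν * (∑ j, |u j|) ^ q + (∑ j, (u j - τ * (if j = i then 1 else 0)) ^ 2) / 2 ≤
          ν * (∑ j, |v j|) ^ q + (∑ j, (v j - τ * (if j = i then 1 else 0)) ^ 2) / 2} =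
    {w : Fin n → ℝ | ∃ t : ℝ,
        (∀ s : ℝ, ν * |t| ^ q + (t - τ) ^ 2 / 2 ≤ ν * |s| ^ q + (s - τ) ^ 2 / 2) ∧
        w = fun j => if j = i then t else 0} :=
  stmt_11_general n q ν τ hq0 hν i
end

section
/- Let 0 < q < 1, ν > 0 and y ∈ ℝⁿ. If ‖y‖₁ < ((2−q)/(1−q))·(νq(1−q))^(1/(2−q)), then the zero vector is the unique minimizer of J_y(u) = ν‖u‖₁^q + (1/2)‖u−y‖₂² over ℝⁿ. -/
/-!
Let `m = max_i |u_i| > 0`. Then `⟨u, y⟩ ≤ m ‖y‖₁`, `m² ≤ ‖u‖₂²` and `m ≤ ‖u‖₁`, so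
`J_y(u) - J_y(0) ≥ ν m^q + m²/2 - m ‖y‖₁`, which is positive as soon as
`‖y‖₁ < ν m^(q-1) + m/2`. By weighted AM-GM the right-hand side is at least
`(2-q)/(2(1-q)) · (2ν(1-q))^(1/(2-q))` for every `m > 0`, and this dominates the given bound
because `q ≤ 2^(q-1)` on `(0, 1)`.
-/

open Real

lemma self_le_two_rpow_sub_one {q : ℝ} (hq : q ≤ 1) : q ≤ (2 : ℝ) ^ (q - 1) := by
  have hlog : log 2 ≤ 1 := by linarith [log_le_sub_one_of_pos (two_pos : (0 : ℝ) < 2)]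
  rw [rpow_def_of_pos two_pos]
  nlinarith [add_one_le_exp (log 2 * (q - 1)), mul_nonneg (sub_nonneg.2 hlog) (sub_nonneg.2 hq)]

lemma one_add_le_rpow_neg_add_mul {r s : ℝ} (hr : 0 ≤ r) (hs : 0 < s) :
    1 + r ≤ s ^ (-r) + r * s := by
  have hr1 : 0 < 1 + r := by linarith
  have hamgm := geom_mean_le_arith_mean2_weighted (w₁ := 1 / (1 + r)) (w₂ := r / (1 + r))
    (p₁ := s ^ (-r)) (p₂ := s) (by positivity) (by positivity) (by positivity) hs.le
    (by field_simp)
  have hgeom : (s ^ (-r)) ^ (1 / (1 + r)) * s ^ (r / (1 + r)) = 1 := by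
    rw [← rpow_mul hs.le, ← rpow_add hs, neg_mul, one_div, ← div_eq_mul_inv, neg_add_cancel,
      rpow_zero]
  have hmean : 1 / (1 + r) * s ^ (-r) + r / (1 + r) * s = (s ^ (-r) + r * s) / (1 + r) := by
    ring
  rwa [hgeom, hmean, le_div_iff₀ hr1, one_mul] at hamgm

/-- The minimum of `m ↦ ν * m ^ (q - 1) + m / 2` over `m > 0`, attained at
`m = (2 * ν * (1 - q)) ^ (1 / (2 - q))`. -/
noncomputable def scalarThreshold (q ν : ℝ) : ℝ :=
  (2 - q) / (2 * (1 - q)) * (2 * ν * (1 - q)) ^ ((1 : ℝ) / (2 - q))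

lemma scalarThreshold_le {q ν m : ℝ} (hq : q < 1) (hν : 0 < ν) (hm : 0 < m) :
    scalarThreshold q ν ≤ ν * m ^ (q - 1) + m / 2 := by
  have hr : 0 < 1 - q := by linarith
  set M := (2 * ν * (1 - q)) ^ ((1 : ℝ) / (2 - q)) with hM
  have hM0 : 0 < M := by positivity
  have hMpow : M ^ (2 - q) = 2 * ν * (1 - q) := by
    rw [hM, ← rpow_mul (by positivity), one_div_mul_cancel (by linarith), rpow_one]
  have hνM : ν * M ^ (q - 1) = M / (2 * (1 - q)) := by
    rw [show q - 1 = 1 - (2 - q) by ring, rpow_sub hM0, rpow_one, hMpow]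
    field_simp
  obtain ⟨s, hs, rfl⟩ : ∃ s, 0 < s ∧ m = s * M := ⟨m / M, div_pos hm hM0, by field_simp⟩
  have hbernoulli := one_add_le_rpow_neg_add_mul hr.le hs
  rw [neg_sub] at hbernoulli
  calc scalarThreshold q ν = M / (2 * (1 - q)) * (1 + (1 - q)) := by
        rw [scalarThreshold]; ring
    _ ≤ M / (2 * (1 - q)) * (s ^ (q - 1) + (1 - q) * s) := by gcongr
    _ = ν * (s * M) ^ (q - 1) + s * M / 2 := by
        rw [mul_rpow hs.le hM0.le, mul_left_comm, hνM]
        field_simp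

lemma le_scalarThreshold {q ν : ℝ} (hq0 : 0 ≤ q) (hq1 : q < 1) (hν : 0 ≤ ν) :
    (2 - q) / (1 - q) * (ν * q * (1 - q)) ^ ((1 : ℝ) / (2 - q)) ≤ scalarThreshold q ν := by
  have hr : 0 < 1 - q := by linarith
  have hp : 0 < 2 - q := by linarith
  have hhalf : (1 / 2 : ℝ) ^ (2 - q) = 2 ^ (q - 1) / 2 := by
    rw [← rpow_sub_one two_ne_zero, one_div, inv_rpow zero_le_two, ← rpow_neg zero_le_two]
    ring_nf
  have hbase : ν * q * (1 - q) ≤ 2 * ν * (1 - q) * (1 / 2) ^ (2 - q) := by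
    rw [hhalf]
    have := self_le_two_rpow_sub_one hq1.le
    have : 0 ≤ ν * (1 - q) := by positivity
    nlinarith
  calc (2 - q) / (1 - q) * (ν * q * (1 - q)) ^ ((1 : ℝ) / (2 - q))
      ≤ (2 - q) / (1 - q) * (2 * ν * (1 - q) * (1 / 2) ^ (2 - q)) ^ ((1 : ℝ) / (2 - q)) := by
        gcongr
    _ = scalarThreshold q ν := by
        rw [mul_rpow (by positivity) (by positivity), ← rpow_mul (by norm_num),
          mul_one_div_cancel hp.ne', rpow_one, scalarThreshold]
        field_simp

lemma mul_lt_of_lt_scalarThreshold {q ν m b : ℝ} (hq : q < 1) (hν : 0 < ν) (hm : 0 < m)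
    (hb : b < scalarThreshold q ν) : m * b < ν * m ^ q + m ^ 2 / 2 := by
  calc m * b < m * (ν * m ^ (q - 1) + m / 2) :=
        mul_lt_mul_of_pos_left (hb.trans_le (scalarThreshold_le hq hν hm)) hm
    _ = ν * m ^ q + m ^ 2 / 2 := by
        rw [rpow_sub_one hm.ne']
        field_simp

lemma Finset.sum_mul_le_mul_sum_abs {ι : Type*} (s : Finset ι) {u y : ι → ℝ} {m : ℝ}
    (hu : ∀ i ∈ s, |u i| ≤ m) : ∑ i ∈ s, u i * y i ≤ m * ∑ i ∈ s, |y i| := by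
  rw [Finset.mul_sum]
  refine Finset.sum_le_sum fun i hi => ?_
  calc u i * y i ≤ |u i| * |y i| := by rw [← abs_mul]; exact le_abs_self _
    _ ≤ m * |y i| := by gcongr; exact hu i hi

theorem stmt_12 (n : ℕ) (q ν : ℝ) (hq0 : 0 < q) (hq1 : q < 1) (hν : 0 < ν)
    (y : Fin n → ℝ)
    (hy : ∑ i, |y i| < ((2 - q) / (1 - q)) * (ν * q * (1 - q)) ^ ((1:ℝ) / (2 - q))) :
    ∀ u : Fin n → ℝ, u ≠ 0 →
      (∑ i, (y i) ^ 2) / 2 < ν * (∑ i, |u i|) ^ q + (∑ i, (u i - y i) ^ 2) / 2 := by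
  intro u hu
  obtain ⟨j, hj⟩ := Function.ne_iff.mp hu
  obtain ⟨i₀, -, hmax⟩ := Finset.univ.exists_max_image (fun i => |u i|) ⟨j, Finset.mem_univ j⟩
  have hm : 0 < |u i₀| := (abs_pos.mpr hj).trans_le (hmax j (Finset.mem_univ j))
  have hcross := Finset.univ.sum_mul_le_mul_sum_abs (y := y) hmax
  have hsq : |u i₀| ^ 2 ≤ ∑ i, u i ^ 2 := by
    rw [sq_abs]
    exact Finset.single_le_sum (fun i _ => sq_nonneg (u i)) (Finset.mem_univ i₀)
  have hl1 : |u i₀| ^ q ≤ (∑ i, |u i|) ^ q := by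
    gcongr
    exact Finset.single_le_sum (fun i _ => abs_nonneg (u i)) (Finset.mem_univ i₀)
  have hexpand : ∑ i, (u i - y i) ^ 2 = ∑ i, u i ^ 2 - 2 * ∑ i, u i * y i + ∑ i, y i ^ 2 := by
    simp only [sub_sq, Finset.sum_add_distrib, Finset.sum_sub_distrib, Finset.mul_sum, mul_assoc]
  have hscalar := mul_lt_of_lt_scalarThreshold hq1 hν hm
    (hy.trans_le (le_scalarThreshold hq0.le hq1 hν.le))
  have := mul_le_mul_of_nonneg_left hl1 hν.le
  linarith
end

section
/- Let 0 < q < 1, ν > 0, and let c_{ν,q} = ((2−q)/(2(1−q)))·(2ν(1−q))^(1/(2−q)). For any τ₂ > τ₁ ≥ c_{ν,q}, every minimizer of t ↦ ν|t|^q + (1/2)(t−τ₁)² is strictly less than the (unique) minimizer of t ↦ ν|t|^q + (1/2)(t−τ₂)²; i.e., max prox_{ν|·|^q}(τ₁) < prox_{ν|·|^q}(τ₂). -/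
/-!
With `F_τ(t) = ν|t|^q + (t - τ)²/2`, adding the minimality of `t₁` for `F_{τ₁}` tested at `t₂`
to that of `t₂` for `F_{τ₂}` tested at `t₁` gives `(τ₂ - τ₁)(t₂ - t₁) ≥ 0`, so `t₁ ≤ t₂`.
A common minimizer `t` is excluded: `t = 0` loses against the test point
`s = (2ν(1-q))^(1/(2-q))` because `τ₂ > c_{ν,q}`, and at `t ≠ 0` the function `ν|·|^q` is
differentiable, so the two stationarity equations `F_{τᵢ}'(t) = 0` differ by `τ₂ - τ₁ ≠ 0`.
-/

open Real

section QuadraticPenalty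

variable {g : ℝ → ℝ} {τ₁ τ₂ t₁ t₂ : ℝ}

theorem le_of_forall_add_sq_le_of_lt
    (ht₁ : ∀ s, g t₁ + (t₁ - τ₁) ^ 2 / 2 ≤ g s + (s - τ₁) ^ 2 / 2)
    (ht₂ : ∀ s, g t₂ + (t₂ - τ₂) ^ 2 / 2 ≤ g s + (s - τ₂) ^ 2 / 2) (hτ : τ₁ < τ₂) :
    t₁ ≤ t₂ := by
  have key : 0 ≤ (τ₂ - τ₁) * (t₂ - t₁) := by nlinarith [ht₁ t₂, ht₂ t₁]
  exact sub_nonneg.mp (nonneg_of_mul_nonneg_right key (sub_pos.mpr hτ))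

theorem hasDerivAt_sub_sq_div_two (τ t : ℝ) :
    HasDerivAt (fun x : ℝ => (x - τ) ^ 2 / 2) (t - τ) t := by
  refine ((((hasDerivAt_id' t).sub_const τ).pow 2).div_const 2).congr_deriv ?_
  simp only [Nat.cast_ofNat, mul_one]
  ring

theorem eq_of_isLocalMin_add_sq {t : ℝ} (hg : DifferentiableAt ℝ g t)
    (h₁ : IsLocalMin (fun x => g x + (x - τ₁) ^ 2 / 2) t)
    (h₂ : IsLocalMin (fun x => g x + (x - τ₂) ^ 2 / 2) t) :
    τ₁ = τ₂ := by
  have e₁ := h₁.hasDerivAt_eq_zero (hg.hasDerivAt.add (hasDerivAt_sub_sq_div_two τ₁ t))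
  have e₂ := h₂.hasDerivAt_eq_zero (hg.hasDerivAt.add (hasDerivAt_sub_sq_div_two τ₂ t))
  linarith

end QuadraticPenalty

theorem differentiableAt_const_mul_abs_rpow (ν q : ℝ) {t : ℝ} (ht : t ≠ 0) :
    DifferentiableAt ℝ (fun x : ℝ => ν * |x| ^ q) t :=
  ((differentiableAt_abs ht).rpow_const (Or.inl (abs_ne_zero.mpr ht))).const_mul ν

theorem rpow_one_div_two_sub_rpow_mul_self {q a : ℝ} (hq : q < 2) (ha : 0 < a) :
    (a ^ (1 / (2 - q))) ^ q * a = (a ^ (1 / (2 - q))) ^ 2 := by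
  set s := a ^ (1 / (2 - q))
  have hs : s ^ (2 - q) = a := by
    rw [← rpow_mul ha.le, one_div_mul_cancel (by linarith), rpow_one]
  rw [← hs, ← rpow_add (rpow_pos_of_pos ha _), add_sub_cancel, rpow_two]

/-- At the threshold `c = (2-q)/(2(1-q)) · s` the test point `s` ties with `0`; above it `s` wins. -/
theorem const_mul_abs_rpow_add_sub_sq_lt {q ν τ : ℝ} (hq0 : 0 < q) (hq1 : q < 1) (hν : 0 < ν)
    (hτ : ((2 - q) / (2 * (1 - q))) * (2 * ν * (1 - q)) ^ ((1 : ℝ) / (2 - q)) < τ) :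
    ν * |(2 * ν * (1 - q)) ^ ((1 : ℝ) / (2 - q))| ^ q
        + ((2 * ν * (1 - q)) ^ ((1 : ℝ) / (2 - q)) - τ) ^ 2 / 2
      < ν * |(0 : ℝ)| ^ q + (0 - τ) ^ 2 / 2 := by
  have h1q : 0 < 1 - q := by linarith
  have ha : 0 < 2 * ν * (1 - q) := by positivity
  have hpow := rpow_one_div_two_sub_rpow_mul_self (by linarith : q < 2) ha
  set s := (2 * ν * (1 - q)) ^ ((1 : ℝ) / (2 - q))
  have hs : 0 < s := rpow_pos_of_pos ha _
  rw [abs_of_pos hs, abs_zero, zero_rpow hq0.ne']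
  rw [div_mul_eq_mul_div, div_lt_iff₀ (by positivity)] at hτ
  nlinarith [mul_lt_mul_of_pos_right hτ hs]

theorem stmt_18 (q ν τ₁ τ₂ : ℝ) (hq0 : 0 < q) (hq1 : q < 1) (hν : 0 < ν)
    (hτ₁ : ((2 - q) / (2 * (1 - q))) * (2 * ν * (1 - q)) ^ ((1:ℝ) / (2 - q)) ≤ τ₁)
    (hτ : τ₁ < τ₂)
    (t₁ t₂ : ℝ)
    (ht₁ : ∀ s : ℝ, ν * |t₁| ^ q + (t₁ - τ₁) ^ 2 / 2 ≤ ν * |s| ^ q + (s - τ₁) ^ 2 / 2)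
    (ht₂ : ∀ s : ℝ, ν * |t₂| ^ q + (t₂ - τ₂) ^ 2 / 2 ≤ ν * |s| ^ q + (s - τ₂) ^ 2 / 2) :
    t₁ < t₂ := by
  refine (le_of_forall_add_sq_le_of_lt (g := fun x => ν * |x| ^ q) ht₁ ht₂ hτ).lt_of_ne fun heq => ?_
  subst heq
  have ht₁_ne : t₁ ≠ 0 := by
    rintro rfl
    exact (ht₂ _).not_gt (const_mul_abs_rpow_add_sub_sq_lt hq0 hq1 hν (hτ₁.trans_lt hτ))
  exact hτ.ne (eq_of_isLocalMin_add_sq (differentiableAt_const_mul_abs_rpow ν q ht₁_ne)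
    (Filter.Eventually.of_forall ht₁) (Filter.Eventually.of_forall ht₂))
end
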